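/- With the 0–1 loss L(x) = 1 iff all m simulated DFAs are in accepting states in program configuration x, and the transformation set consisting of the step transformation (advancing all DFAs by one symbol α ∈ Σ) and the identity: max over sequences q of length k = n^m of L(q(x₀)) equals 1 if and only if the intersection of the languages of the DFAs is nonempty, where x₀ is the initial configuration. -/

import Mathlib

/-!
The step-or-identity programs are exactly the runs of the product automaton `DFA.pi D`, padded
with idle steps, so a program of length `k` reaches an accepting configuration iff the product
accepts some word of length at most `k`. The product has at most `n ^ m` states, and removing
loops (`DFA.evalFrom_split`) shows that a nonempty language of an automaton contains a word
shorter than its number of states. Finally the loss only takes the values `0` and `1`, so its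
supremum is `1` exactly when the value `1` is attained.
-/

namespace DFA

variable {α σ : Type*} (M : DFA α σ)

theorem exists_length_lt_card_evalFrom_eq [Fintype σ] (s : σ) (x : List α) :
    ∃ y : List α, y.length < Fintype.card σ ∧ M.evalFrom s y = M.evalFrom s x := by
  induction h : x.length using Nat.strong_induction_on generalizing x with
  | _ N ih =>
    by_cases hlen : x.length < Fintype.card σ
    · exact ⟨x, hlen, rfl⟩
    -- cutting out a loop `b` shortens the word without changing the state it reaches
    obtain ⟨q, a, b, c, rfl, -, hb, rfl, hloop, hc⟩ := M.evalFrom_split (not_lt.mp hlen) rfl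
    have hshorter : (a ++ c).length < N := by
      have hb' := List.length_pos_iff.mpr hb
      simp only [← h, List.length_append] at hb' ⊢
      omega
    obtain ⟨y, hy, hyx⟩ := ih _ hshorter (a ++ c) rfl
    refine ⟨y, hy, ?_⟩
    rw [hyx, evalFrom_of_append, evalFrom_of_append, evalFrom_of_append, hloop]

theorem exists_mem_accepts_length_lt_card [Fintype σ] {x : List α} (hx : x ∈ M.accepts) :
    ∃ y ∈ M.accepts, y.length < Fintype.card σ := by
  obtain ⟨y, hy, hyx⟩ := M.exists_length_lt_card_evalFrom_eq M.start x
  exact ⟨y, by rwa [mem_accepts, eval, hyx], hy⟩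

def IsStepOrId (f : σ → σ) : Prop :=
  (∃ a, f = fun s => M.step s a) ∨ f = id

theorem exists_evalFrom_eq_foldl {q : List (σ → σ)} (hq : ∀ f ∈ q, M.IsStepOrId f) (s : σ) :
    ∃ w : List α, w.length ≤ q.length ∧ M.evalFrom s w = q.foldl (fun c f => f c) s := by
  induction q generalizing s with
  | nil => exact ⟨[], le_rfl, rfl⟩
  | cons f q ih =>
    have hq' : ∀ g ∈ q, M.IsStepOrId g := fun g hg => hq g (List.mem_cons_of_mem f hg)
    rcases hq f List.mem_cons_self with ⟨a, rfl⟩ | rfl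
    · obtain ⟨w, hw, hfold⟩ := ih hq' (M.step s a)
      exact ⟨a :: w, by simpa using hw, hfold⟩
    · obtain ⟨w, hw, hfold⟩ := ih hq' s
      exact ⟨w, by simp only [List.length_cons]; omega, hfold⟩

theorem foldl_map_step (w : List α) (s : σ) :
    (w.map fun a s => M.step s a).foldl (fun c f => f c) s = M.evalFrom s w := by
  induction w generalizing s with
  | nil => rfl
  | cons a w ih => exact ih _

theorem exists_foldl_eq_evalFrom {w : List α} {k : ℕ} (hw : w.length ≤ k) (s : σ) :
    ∃ q : List (σ → σ), q.length = k ∧ (∀ f ∈ q, M.IsStepOrId f) ∧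
      q.foldl (fun c f => f c) s = M.evalFrom s w := by
  refine ⟨(w.map fun a s => M.step s a) ++ List.replicate (k - w.length) id, ?_, ?_, ?_⟩
  · simp only [List.length_append, List.length_map, List.length_replicate]
    omega
  · simp only [List.mem_append, List.mem_map, List.mem_replicate]
    rintro f (⟨a, -, rfl⟩ | ⟨-, rfl⟩)
    exacts [Or.inl ⟨a, rfl⟩, Or.inr rfl]
  · rw [List.foldl_append, foldl_map_step, List.foldl_ext _ (fun c _ => c) _
      fun c f hf => by rw [List.eq_of_mem_replicate hf, id], List.foldl_fixed]

theorem exists_program_iff_exists_mem_accepts [Fintype σ] {k : ℕ} (hk : Fintype.card σ ≤ k) :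
    (∃ q : List (σ → σ), q.length = k ∧ (∀ f ∈ q, M.IsStepOrId f) ∧
      q.foldl (fun c f => f c) M.start ∈ M.accept) ↔ ∃ w, w ∈ M.accepts := by
  constructor
  · rintro ⟨q, -, hq, hacc⟩
    obtain ⟨w, -, hw⟩ := M.exists_evalFrom_eq_foldl hq M.start
    exact ⟨w, by rwa [mem_accepts, eval, hw]⟩
  · rintro ⟨x, hx⟩
    obtain ⟨w, hw, hlen⟩ := M.exists_mem_accepts_length_lt_card hx
    obtain ⟨q, hqk, hq, hfold⟩ := M.exists_foldl_eq_evalFrom (hlen.le.trans hk) M.start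
    exact ⟨q, hqk, hq, hfold ▸ hw⟩

variable {ι : Type*} {σ : ι → Type*}

def pi (D : ∀ i, DFA α (σ i)) : DFA α (∀ i, σ i) where
  step c a i := (D i).step (c i) a
  start i := (D i).start
  accept := {c | ∀ i, c i ∈ (D i).accept}

theorem pi_evalFrom_apply (D : ∀ i, DFA α (σ i)) (c : ∀ i, σ i) (w : List α) (i : ι) :
    (pi D).evalFrom c w i = (D i).evalFrom (c i) w := by
  induction w generalizing c with
  | nil => rfl
  | cons a w ih => exact ih _

theorem mem_pi_accepts (D : ∀ i, DFA α (σ i)) (w : List α) :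
    w ∈ (pi D).accepts ↔ ∀ i, w ∈ (D i).accepts := by
  simp only [mem_accepts]
  exact forall_congr' fun i => by rw [eval, pi_evalFrom_apply]; rfl

end DFA

theorem Real.sSup_eq_one_iff_one_mem {S : Set ℝ} (hS : S ⊆ {0, 1}) : sSup S = 1 ↔ 1 ∈ S := by
  refine ⟨fun h => ?_, fun h => le_antisymm ?_ ?_⟩
  · by_contra h1
    have : S ⊆ {0} := fun v hv => (hS hv).resolve_right (by rintro rfl; exact h1 hv)
    have := Real.sSup_le (fun v hv => (this hv).le) le_rfl
    linarith
  · exact Real.sSup_le (fun v hv => by rcases hS hv with rfl | rfl <;> norm_num) zero_le_one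
  · exact le_csSup ((Set.toFinite _).subset hS).bddAbove h

open scoped Classical

/-- The reduction from DFA-intersection nonemptiness to loss maximization: with a 0–1 loss
that is 1 exactly on accepting configurations, and transformations consisting of
simultaneous one-symbol steps and the identity, the maximal loss over sequences of length
n^m is 1 iff the intersection of the languages is nonempty. -/
theorem loss_max_iff_intersection_nonempty {α : Type*} {m n : ℕ} {σ : Fin m → Type*}
    [∀ i, Fintype (σ i)] (D : ∀ i, DFA α (σ i))
    (hcard : ∀ i, Fintype.card (σ i) ≤ n) :
    (sSup {v : ℝ | ∃ q : List ((∀ i, σ i) → (∀ i, σ i)),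
        q.length = n ^ m ∧
        (∀ f ∈ q, (∃ a : α, f = fun c i => (D i).step (c i) a) ∨ f = id) ∧
        v = (if (∀ i, (q.foldl (fun c f => f c) (fun i => (D i).start)) i ∈ (D i).accept)
              then (1 : ℝ) else 0)} = 1)
      ↔ ∃ w : List α, ∀ i, w ∈ (D i).accepts := by
  have hcard_pi : Fintype.card (∀ i, σ i) ≤ n ^ m := by
    simpa [Fintype.card_pi] using Finset.prod_le_pow_card Finset.univ _ _ fun i _ => hcard i
  rw [Real.sSup_eq_one_iff_one_mem (by rintro _ ⟨q, -, -, rfl⟩; split_ifs <;> simp)]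
  simp_rw [← DFA.mem_pi_accepts, ← (DFA.pi D).exists_program_iff_exists_mem_accepts hcard_pi]
  simp only [Set.mem_ofPred_eq, eq_comm (a := (1 : ℝ)), ite_eq_left_iff, zero_ne_one,
    imp_false, not_not]
  -- the transformations and accepting configurations of the statement are those of `DFA.pi D`
  rfl
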